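/- For every integer k with 1 ≤ k ≤ 6 and every κ > 0 there exists θ₀ ∈ (π/2, π) such that for every θ ∈ (π/2, θ₀] there is a constant c > 0 with: for all τ > 0 satisfying κ·τ·sin θ ≤ π and all z ∈ Γ^τ_{θ,κ}, one has |μ₂(e^{−zτ}) − 1| ≤ c·τ^k·|z|^k. -/

import Mathlib

/-! Consistency of the corrected scheme gives `μ₂(ξ) - 1 = (1 - ξ)^k q_k(ξ)` with an explicit
polynomial `q_k`. Put `w = zτ`. On the contour `‖w‖ ≤ π / sin θ`, and for `θ ≤ 3π/4` this is at
most `√2 π < 2π`; hence `e^{-w} ≠ 1` (as `w ≠ 0`), `‖1 - e^{-w}‖ ≤ e^{√2 π} ‖w‖`, and `q_k(e^{-w})`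
is bounded by compactness, so `‖μ₂(e^{-w}) - 1‖ ≤ c ‖w‖^k = c τ^k ‖z‖^k`. -/

open Real

/-- Generating polynomial of the k-step BDF method: δ(ξ) = ∑_{j=1}^{k} (1/j)(1−ξ)^j. -/
noncomputable def bdfDelta (k : ℕ) (ξ : ℂ) : ℂ :=
  ∑ j ∈ Finset.Icc 1 k, (1 / (j : ℂ)) * (1 - ξ) ^ j

/-- Truncated sectorial contour Γ^τ_{θ,κ}. -/
noncomputable def contourTrunc (θ κ τ : ℝ) : Set ℂ :=
  {z : ℂ | ‖z‖ = κ ∧ |z.arg| ≤ θ} ∪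
    {z : ℂ | ∃ r : ℝ, κ ≤ r ∧ r ≤ π / (τ * Real.sin θ) ∧
      (z = (r : ℂ) * Complex.exp (θ * Complex.I) ∨
        z = (r : ℂ) * Complex.exp (-θ * Complex.I))}

/-- Starting-correction coefficients b_j^{(k)} of the BDF-k scheme. -/
noncomputable def bCoef : ℕ → ℕ → ℂ
  | 2, 1 => 1 / 2
  | 3, 1 => 11 / 12
  | 3, 2 => -(5 / 12)
  | 4, 1 => 31 / 24
  | 4, 2 => -(7 / 6)
  | 4, 3 => 3 / 8
  | 5, 1 => 1181 / 720
  | 5, 2 => -(177 / 80)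
  | 5, 3 => 341 / 240
  | 5, 4 => -(251 / 720)
  | 6, 1 => 2837 / 1440
  | 6, 2 => -(2543 / 720)
  | 6, 3 => 17 / 5
  | 6, 4 => -(1201 / 720)
  | 6, 5 => 95 / 288
  | _, _ => 0

/-- μ₂(ξ) = δ(ξ)·(ξ/(1−ξ) + ∑_{j=1}^{k−1} b_j^{(k)} ξ^j). -/
noncomputable def mu2 (k : ℕ) (ξ : ℂ) : ℂ :=
  bdfDelta k ξ * (ξ / (1 - ξ) + ∑ j ∈ Finset.Icc 1 (k - 1), bCoef k j * ξ ^ j)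

open Polynomial

noncomputable def mu2Quotient : ℕ → ℂ[X]
  | 1 => -1
  | 2 => -1 + C (1/4) * X
  | 3 => -1 + C (37/72) * X - C (5/36) * X^2
  | 4 => -1 + C (223/288) * X - C (5/12) * X^2 + C (3/32) * X^3
  | 5 => -1 + C (44437/43200) * X - C (8929/10800) * X^2 + C (5347/14400) * X^3
      - C (251/3600) * X^4
  | 6 => -1 + C (36773/28800) * X - C (4907/3600) * X^2 + C (8801/9600) * X^3
      - C (743/2160) * X^4 + C (95/1728) * X^5
  | _ => 0

theorem mu2_sub_one_eq {k : ℕ} (hk1 : 1 ≤ k) (hk6 : k ≤ 6) {ξ : ℂ} (hξ : ξ ≠ 1) :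
    mu2 k ξ - 1 = (1 - ξ) ^ k * (mu2Quotient k).eval ξ := by
  have : 1 - ξ ≠ 0 := sub_ne_zero.2 hξ.symm
  interval_cases k
  all_goals
    simp [mu2, bdfDelta, mu2Quotient, Finset.sum_Icc_succ_top, bCoef]
    field_simp
  all_goals ring

theorem norm_one_sub_exp_neg_le (w : ℂ) : ‖1 - Complex.exp (-w)‖ ≤ ‖w‖ * Real.exp ‖w‖ := by
  simpa [norm_sub_rev] using Complex.norm_exp_sub_sum_le_norm_mul_exp (-w) 1

theorem exp_ne_one_of_norm_lt_two_pi {w : ℂ} (hw : w ≠ 0) (hwπ : ‖w‖ < 2 * π) :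
    Complex.exp w ≠ 1 := by
  rw [Ne, Complex.exp_eq_one_iff]
  rintro ⟨n, rfl⟩
  have hn : n ≠ 0 := by rintro rfl; simp at hw
  have hn1 : 1 ≤ |(n : ℝ)| := by exact_mod_cast Int.one_le_abs hn
  have hnorm : ‖(n : ℂ) * (2 * π * Complex.I)‖ = |(n : ℝ)| * (2 * π) := by
    simp [abs_of_pos pi_pos]
  nlinarith [pi_pos]

theorem exists_norm_mu2_exp_neg_sub_one_le {k : ℕ} (hk1 : 1 ≤ k) (hk6 : k ≤ 6) {R : ℝ}
    (hR : R < 2 * π) :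
    ∃ c > (0 : ℝ), ∀ w : ℂ, w ≠ 0 → ‖w‖ ≤ R →
      ‖mu2 k (Complex.exp (-w)) - 1‖ ≤ c * ‖w‖ ^ k := by
  obtain ⟨M, hM⟩ := (isCompact_closedBall (0 : ℂ) R).exists_bound_of_continuousOn
    (f := fun w => (mu2Quotient k).eval (Complex.exp (-w))) (by fun_prop)
  refine ⟨(max M 0 + 1) * Real.exp R ^ k, by positivity, fun w hw0 hwR => ?_⟩
  have hexp : Complex.exp (-w) ≠ 1 :=
    exp_ne_one_of_norm_lt_two_pi (neg_ne_zero.2 hw0) (by rw [norm_neg]; linarith)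
  have hq : ‖(mu2Quotient k).eval (Complex.exp (-w))‖ ≤ max M 0 + 1 :=
    (hM w (by simpa using hwR)).trans (by linarith [le_max_left M 0])
  have hsub : ‖1 - Complex.exp (-w)‖ ≤ ‖w‖ * Real.exp R :=
    (norm_one_sub_exp_neg_le w).trans (by gcongr)
  calc ‖mu2 k (Complex.exp (-w)) - 1‖
      = ‖1 - Complex.exp (-w)‖ ^ k * ‖(mu2Quotient k).eval (Complex.exp (-w))‖ := by
        rw [mu2_sub_one_eq hk1 hk6 hexp, norm_mul, norm_pow]
    _ ≤ (‖w‖ * Real.exp R) ^ k * (max M 0 + 1) := by gcongr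
    _ = (max M 0 + 1) * Real.exp R ^ k * ‖w‖ ^ k := by ring

theorem norm_bounds_of_mem_contourTrunc {θ κ τ : ℝ} (hκ : 0 ≤ κ) (hτ : 0 < τ)
    (hθ : 0 < Real.sin θ) (hκτ : κ * τ * Real.sin θ ≤ π) {z : ℂ}
    (hz : z ∈ contourTrunc θ κ τ) : κ ≤ ‖z‖ ∧ ‖z‖ * τ * Real.sin θ ≤ π := by
  rcases hz with ⟨hzκ, -⟩ | ⟨r, hκr, hrπ, hz⟩
  · exact ⟨hzκ.ge, hzκ ▸ hκτ⟩
  · have hzr : ‖z‖ = r := by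
      rcases hz with rfl | rfl <;> simp [Complex.norm_exp, abs_of_nonneg (hκ.trans hκr)]
    rw [hzr, mul_assoc]
    exact ⟨hκr, (le_div_iff₀ (by positivity)).1 hrπ⟩

theorem sqrt_two_div_two_le_sin {θ : ℝ} (h₁ : π / 2 ≤ θ) (h₂ : θ ≤ 3 * π / 4) :
    √2 / 2 ≤ Real.sin θ := by
  rw [← Real.cos_pi_div_four, ← Real.cos_sub_pi_div_two]
  exact Real.cos_le_cos_of_nonneg_of_le_pi (by linarith) (by linarith [pi_pos]) (by linarith)

/-- For 1 ≤ k ≤ 6 and κ > 0: |μ₂(e^{−zτ}) − 1| ≤ c·τ^k·|z|^k on Γ^τ_{θ,κ}. -/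
theorem mu2_error (k : ℕ) (hk1 : 1 ≤ k) (hk6 : k ≤ 6) (κ : ℝ) (hκ : 0 < κ) :
    ∃ θ₀ ∈ Set.Ioo (π / 2) π, ∀ θ ∈ Set.Ioc (π / 2) θ₀,
      ∃ c > (0 : ℝ), ∀ τ : ℝ, 0 < τ → κ * τ * Real.sin θ ≤ π →
        ∀ z ∈ contourTrunc θ κ τ,
          ‖mu2 k (Complex.exp (-z * (τ : ℂ))) - 1‖
            ≤ c * τ ^ k * ‖z‖ ^ k := by
  have hsqrt : √2 ^ 2 = 2 := Real.sq_sqrt zero_le_two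
  obtain ⟨c, hc, hbound⟩ := exists_norm_mu2_exp_neg_sub_one_le hk1 hk6 (R := √2 * π)
    (by nlinarith [pi_pos, Real.sqrt_nonneg 2])
  refine ⟨3 * π / 4, ⟨by linarith [pi_pos], by linarith [pi_pos]⟩, fun θ hθ => ⟨c, hc, ?_⟩⟩
  intro τ hτ hκτ z hz
  have hsin := sqrt_two_div_two_le_sin hθ.1.le hθ.2
  obtain ⟨hκz, hzπ⟩ :=
    norm_bounds_of_mem_contourTrunc hκ.le hτ (hsin.trans_lt' (by positivity)) hκτ hz
  have hw : ‖z * τ‖ = ‖z‖ * τ := by rw [norm_mul, Complex.norm_real, Real.norm_of_nonneg hτ.le]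
  have hzτ : 0 < ‖z‖ * τ := mul_pos (hκ.trans_le hκz) hτ
  have hwR : ‖z * τ‖ ≤ √2 * π := by
    have := (mul_le_mul_of_nonneg_left hsin hzτ.le).trans hzπ
    rw [hw]; nlinarith [mul_le_mul_of_nonneg_right this (Real.sqrt_nonneg 2)]
  calc ‖mu2 k (Complex.exp (-z * τ)) - 1‖ = ‖mu2 k (Complex.exp (-(z * τ))) - 1‖ := by
        rw [neg_mul]
    _ ≤ c * ‖z * τ‖ ^ k := hbound _ (norm_pos_iff.1 (hw ▸ hzτ)) hwR
    _ = c * τ ^ k * ‖z‖ ^ k := by rw [hw]; ring
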